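/- arXiv:1412.7798 — 2 statements merged into one kernel-verified Lean document; each statement's English description precedes it below -/
import Mathlib

section
/- Let n, t be positive integers with 2 ≤ t ≤ n - 1 and let k = C(n-t,2) + t(n-t). Then g(n,k) = k + t - 2; that is, every connected graph on n vertices with at most k + t - 2 edges satisfies mc(G) ≤ k, and there exists a connected graph on n vertices with k + t - 1 edges and mc(G) > k. -/
open Finset SimpleGraph
attribute [local instance] Classical.propDecidable

private lemma choose_two_succ (m : ℕ) : (m+1).choose 2 = m.choose 2 + m := by
  rw [Nat.choose_succ_succ, Nat.choose_one_right, Nat.add_comm]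

private lemma choose_two_supadd (a b : ℕ) :
    (a+1).choose 2 + (b+1).choose 2 ≤ (a+b+1).choose 2 := by
  induction b with
  | zero => simp
  | succ b ih =>
      have h1 := choose_two_succ (b+1)
      have h2 := choose_two_succ (a+b+1)
      have : a + (b+1) + 1 = (a+b+1)+1 := by omega
      rw [this, h1, h2]
      omega

private lemma sum_choose_two_le {α : Type*} (s : Finset α) (f : α → ℕ) :
    (∑ x ∈ s, (f x + 1).choose 2) ≤ ((∑ x ∈ s, f x) + 1).choose 2 := by
  classical
  induction s using Finset.induction with
  | empty => simp
  | insert _ _ hx ih =>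
      rw [Finset.sum_insert hx, Finset.sum_insert hx]
      exact le_trans (Nat.add_le_add_left ih _) (choose_two_supadd _ _)

private lemma choose_two_split (a t : ℕ) :
    (a + t).choose 2 = a.choose 2 + a * t + t.choose 2 := by
  induction t with
  | zero => simp
  | succ t ih =>
      have h1 := choose_two_succ (a+t)
      have h2 := choose_two_succ t
      have h3 : a + (t+1) = (a+t)+1 := by omega
      rw [h3, h1, ih, h2, Nat.mul_succ]
      omega

section ReachPairs
variable {V : Type*} [Fintype V]

private lemma exists_step (H : SimpleGraph V) {u r : V} (hne : u ≠ r) (hr : H.Reachable u r) :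
    ∃ v, H.Adj u v ∧ H.dist v r + 1 = H.dist u r := by
  have hd : 0 < H.dist u r := hr.pos_dist_of_ne hne
  obtain ⟨p, hp⟩ := hr.exists_walk_length_eq_dist
  cases p with
  | nil => exact (hne rfl).elim
  | @cons _ v _ h q =>
      refine ⟨v, h, ?_⟩
      have h1 : H.dist v r ≤ q.length := dist_le q
      obtain ⟨p', hp'⟩ := q.reachable.exists_walk_length_eq_dist
      have h2 : H.dist u r ≤ (Walk.cons h p').length := dist_le _
      simp [Walk.length_cons] at hp h2
      omega

private lemma reach_pairs_card_le (H : SimpleGraph V) (F : Finset (Sym2 V))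
    (hF : ∀ u v : V, H.Adj u v → s(u,v) ∈ F) :
    (univ.filter fun p : Sym2 V => ¬ p.IsDiag ∧ ∀ u v, p = s(u,v) → H.Reachable u v).card
      ≤ (F.card + 1).choose 2 := by
  classical
  haveI : Fintype H.ConnectedComponent :=
    Fintype.ofSurjective H.connectedComponentMk (fun c => Quot.exists_rep c)
  set RP := (univ.filter fun p : Sym2 V => ¬ p.IsDiag ∧ ∀ u v, p = s(u,v) → H.Reachable u v)
    with hRP
  set supp : H.ConnectedComponent → Finset V :=
    fun K => univ.filter (fun u => H.connectedComponentMk u = K) with hsupp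
  -- step 1 : RP is inside the union over components of pairs within the component
  have hsub : RP ⊆ (univ : Finset H.ConnectedComponent).biUnion
      (fun K => (supp K).offDiag.image Sym2.mk.uncurry) := by
    intro p hp
    refine Sym2.ind (f := fun q => q ∈ RP → q ∈ _) (fun u v hq => ?_) p hp
    rw [hRP, mem_filter] at hq
    obtain ⟨-, hdiag, hreach⟩ := hq
    have hne : u ≠ v := by simpa [Sym2.mk_isDiag_iff] using hdiag
    have hr : H.Reachable u v := hreach u v rfl
    refine mem_biUnion.mpr ⟨H.connectedComponentMk u, mem_univ _, ?_⟩
    refine mem_image.mpr ⟨(u, v), ?_, rfl⟩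
    refine mem_offDiag.mpr ⟨?_, ?_, hne⟩
    · simp only [hsupp, mem_filter, mem_univ, true_and]
    · simp only [hsupp, mem_filter, mem_univ, true_and]
      exact (ConnectedComponent.eq.mpr hr).symm
  have h1 : RP.card ≤ ∑ K : H.ConnectedComponent, ((supp K).card).choose 2 := by
    refine le_trans (card_le_card hsub) (le_trans (card_biUnion_le) ?_)
    refine Finset.sum_le_sum (fun K _ => ?_)
    rw [Sym2.card_image_offDiag]
  -- each component is nonempty
  have hne : ∀ K : H.ConnectedComponent, (supp K).card ≠ 0 := by
    intro K
    obtain ⟨v, hv⟩ := Quot.exists_rep K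
    have : v ∈ supp K := by
      simp only [hsupp, mem_filter, mem_univ, true_and]; exact hv
    exact Finset.card_ne_zero_of_mem this
  -- step 2 : superadditivity
  have h2 : ∑ K : H.ConnectedComponent, ((supp K).card).choose 2
      ≤ ((∑ K : H.ConnectedComponent, ((supp K).card - 1)) + 1).choose 2 := by
    have := sum_choose_two_le (univ : Finset H.ConnectedComponent)
      (fun K => (supp K).card - 1)
    refine le_trans (le_of_eq ?_) this
    refine Finset.sum_congr rfl (fun K _ => ?_)
    have := hne K
    congr 1
    omega
  -- step 3 : the sum of (|supp K| - 1) is at most the number of edges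
  have h3 : (∑ K : H.ConnectedComponent, ((supp K).card - 1)) ≤ F.card := by
    set r : H.ConnectedComponent → V := fun K => Classical.choose (Quot.exists_rep K) with hr
    have hrspec : ∀ K, H.connectedComponentMk (r K) = K :=
      fun K => Classical.choose_spec (Quot.exists_rep K)
    have hreach : ∀ u, H.Reachable u (r (H.connectedComponentMk u)) := by
      intro u
      exact ConnectedComponent.exact (by rw [hrspec])
    set st : V → V := fun u => if h : u ≠ r (H.connectedComponentMk u) then
      Classical.choose (exists_step H h (hreach u)) else u with hst
    have hstspec : ∀ u, u ≠ r (H.connectedComponentMk u) →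
        H.Adj u (st u) ∧ H.dist (st u) (r (H.connectedComponentMk u)) + 1
          = H.dist u (r (H.connectedComponentMk u)) := by
      intro u h
      rw [hst]; simp only [h, dif_pos, ne_eq, not_false_eq_true]
      exact Classical.choose_spec (exists_step H h (hreach u))
    set B : Finset V := univ.filter (fun u => u ≠ r (H.connectedComponentMk u)) with hB
    have hcard : (∑ K : H.ConnectedComponent, ((supp K).card - 1)) = B.card := by
      rw [card_eq_sum_card_fiberwise (f := H.connectedComponentMk) (t := univ)
        (fun x _ => mem_univ _)]
      refine Finset.sum_congr rfl (fun K _ => ?_)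
      have hfib : B.filter (fun u => H.connectedComponentMk u = K) = supp K \ {r K} := by
        ext u
        simp only [hB, hsupp, mem_filter, mem_univ, true_and, mem_sdiff, mem_singleton]
        constructor
        · rintro ⟨h1, h2⟩; exact ⟨h2, by rw [h2] at h1; exact h1⟩
        · rintro ⟨h1, h2⟩; exact ⟨by rw [h1]; exact h2, h1⟩
      rw [hfib, card_sdiff_of_subset (by simp [hsupp, hrspec K]), card_singleton]
    rw [hcard]
    refine card_le_card_of_injOn (fun u => s(u, st u)) ?_ ?_
    · intro u hu
      rw [Finset.mem_coe, hB, mem_filter] at hu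
      exact hF _ _ ((hstspec u hu.2).1)
    · intro u hu u' hu' heq
      rw [hB, coe_filter] at hu hu'
      simp only [Set.mem_setOf_eq] at hu hu'
      rw [Sym2.eq_iff] at heq
      rcases heq with ⟨h1, h2⟩ | ⟨h1, h2⟩
      · exact h1
      · exfalso
        subst h1
        -- now u = st u' ; goal False; hu : st u' ≠ r ..., hu' : u' ≠ r ...
        have hadj := (hstspec u' hu'.2).1
        have hcomp : H.connectedComponentMk (st u') = H.connectedComponentMk u' :=
          (ConnectedComponent.connectedComponentMk_eq_of_adj hadj).symm
        have e1 := (hstspec u' hu'.2).2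
        have e2 := (hstspec (st u') hu.2).2
        rw [hcomp, h2] at e2
        omega
  calc RP.card ≤ _ := h1
    _ ≤ _ := h2
    _ ≤ _ := Nat.choose_le_choose _ (by omega)
end ReachPairs

/-- An edge-coloring `c` of a graph `G` is a *monochromatic connection coloring*
(MC-coloring) if any two vertices are joined by a path all of whose edges
receive the same color. -/
def IsMCColoring {V : Type*} (G : SimpleGraph V) (c : Sym2 V → ℕ) : Prop :=
  ∀ u v : V, ∃ p : G.Walk u v, p.IsPath ∧ ∃ k : ℕ, ∀ e ∈ p.edges, c e = k

/-- The *monochromatic connection number* `mc(G)`: the maximum number of colors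
used in an MC-coloring of `G`. -/
noncomputable def mcNumber {V : Type*} (G : SimpleGraph V) : ℕ :=
  sSup {k | ∃ c : Sym2 V → ℕ, IsMCColoring G c ∧ (c '' G.edgeSet).ncard = k}

section NonEdge
variable {V : Type*} [Fintype V]

omit [Fintype V] in
private lemma reach_symm_all (H : SimpleGraph V) {u v : V} (h : H.Reachable u v) :
    ∀ u' v', s(u,v) = s(u',v') → H.Reachable u' v' := by
  intro u' v' he
  rw [Sym2.eq_iff] at he
  rcases he with ⟨rfl, rfl⟩ | ⟨rfl, rfl⟩
  · exact h
  · exact h.symm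

private lemma nonedge_pairs_card_le (G : SimpleGraph V) (F : Finset (Sym2 V))
    (hF : ∀ e ∈ F, e ∈ G.edgeSet) :
    (univ.filter fun p : Sym2 V => ¬ p.IsDiag ∧ p ∉ G.edgeSet ∧
      ∀ u v, p = s(u,v) → (SimpleGraph.fromEdgeSet (↑F : Set (Sym2 V))).Reachable u v).card
      ≤ F.card.choose 2 := by
  classical
  set H := SimpleGraph.fromEdgeSet (↑F : Set (Sym2 V)) with hH
  set NE := (univ.filter fun p : Sym2 V => ¬ p.IsDiag ∧ p ∉ G.edgeSet ∧
      ∀ u v, p = s(u,v) → H.Reachable u v) with hNE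
  set RP := (univ.filter fun p : Sym2 V => ¬ p.IsDiag ∧ ∀ u v, p = s(u,v) → H.Reachable u v)
    with hRP
  have hsub : NE ∪ F ⊆ RP := by
    intro p hp
    rcases mem_union.mp hp with hp | hp
    · rw [hNE, mem_filter] at hp
      exact mem_filter.mpr ⟨mem_univ _, hp.2.1, hp.2.2.2⟩
    · have hpe := hF p hp
      have hdiag := G.not_isDiag_of_mem_edgeSet hpe
      refine mem_filter.mpr ⟨mem_univ _, hdiag, ?_⟩
      intro u v hpv
      subst hpv
      have hne : u ≠ v := by simpa [Sym2.mk_isDiag_iff] using hdiag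
      exact ((SimpleGraph.fromEdgeSet_adj _).mpr ⟨Finset.mem_coe.mpr hp, hne⟩).reachable
  have hdisj : Disjoint NE F := by
    rw [Finset.disjoint_left]
    intro p hp hpF
    rw [hNE, mem_filter] at hp
    exact hp.2.2.1 (hF p hpF)
  have := card_le_card hsub
  rw [card_union_of_disjoint hdisj] at this
  have h2 := reach_pairs_card_le H F (fun u v hadj => by
    rw [hH] at hadj
    exact Finset.mem_coe.mp ((SimpleGraph.fromEdgeSet_adj _).mp hadj).1)
  replace h2 : RP.card ≤ (F.card + 1).choose 2 := by rw [hRP]; convert h2 using 2; ext p; simp only [mem_filter]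
  have h3 := choose_two_succ F.card
  omega

private lemma mc_count (G : SimpleGraph V) (c : Sym2 V → ℕ) (hc : IsMCColoring G c)
    (E : Finset (Sym2 V)) (hE : ∀ e, e ∈ E ↔ e ∈ G.edgeSet) :
    (Fintype.card V).choose 2 ≤ E.card +
      ((E.card - (E.image c).card) + 1).choose 2 := by
  classical
  set Q := E.image c with hQ
  set cls : ℕ → Finset (Sym2 V) := fun q => E.filter (fun e => c e = q) with hcls
  set NE := univ.filter (fun p : Sym2 V => ¬ p.IsDiag ∧ p ∉ G.edgeSet) with hNEdef
  have hpairs : (univ.filter (fun p : Sym2 V => ¬ p.IsDiag)).card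
      = (Fintype.card V).choose 2 := by
    have heq : (univ.filter fun p : Sym2 V => ¬ p.IsDiag)
        = (univ : Finset V).offDiag.image Sym2.mk.uncurry := by
      ext p
      refine Sym2.ind (f := fun q => (q ∈ _ ↔ q ∈ _)) (fun u v => ?_) p
      simp only [mem_filter, mem_univ, true_and, mem_image, mem_offDiag, Sym2.mk_isDiag_iff,
        Prod.exists, Function.uncurry_apply_pair, Sym2.eq_iff]
      constructor
      · intro h
        exact ⟨u, v, h, Or.inl ⟨rfl, rfl⟩⟩
      · rintro ⟨a, b, hab, ⟨rfl, rfl⟩ | ⟨rfl, rfl⟩⟩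
        · exact hab
        · exact fun hh => hab hh.symm
    rw [heq, Sym2.card_image_offDiag, card_univ]
  have hsplit : NE.card + E.card = (Fintype.card V).choose 2 := by
    rw [← hpairs]
    have hun : (univ.filter fun p : Sym2 V => ¬ p.IsDiag) = NE ∪ E := by
      ext p
      simp only [hNEdef, mem_union, mem_filter, mem_univ, true_and, hE p]
      constructor
      · intro h
        by_cases hpe : p ∈ G.edgeSet
        · exact Or.inr hpe
        · exact Or.inl ⟨h, hpe⟩
      · rintro (⟨h, -⟩ | h)
        · exact h
        · exact G.not_isDiag_of_mem_edgeSet h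
    rw [hun, card_union_of_disjoint]
    rw [Finset.disjoint_left]
    intro p hp hpE
    rw [hNEdef, mem_filter] at hp
    exact hp.2.2 ((hE p).mp hpE)
  have hcover : NE ⊆ Q.biUnion (fun q => univ.filter (fun p : Sym2 V => ¬p.IsDiag ∧
      p ∉ G.edgeSet ∧ ∀ u v, p = s(u,v) →
        (SimpleGraph.fromEdgeSet (↑(cls q) : Set (Sym2 V))).Reachable u v)) := by
    intro p hp
    refine Sym2.ind (f := fun q => q ∈ NE → q ∈ _) (fun u v hq => ?_) p hp
    rw [hNEdef, mem_filter] at hq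
    obtain ⟨-, hdiag, hnedge⟩ := hq
    have hne : u ≠ v := by simpa [Sym2.mk_isDiag_iff] using hdiag
    obtain ⟨pa, hpath, q0, hq0⟩ := hc u v
    have hedges : ∀ e ∈ pa.edges, e ∈ cls q0 := fun e he =>
      mem_filter.mpr ⟨(hE e).mpr (pa.edges_subset_edgeSet he), hq0 e he⟩
    have hennil : pa.edges ≠ [] := by
      intro hnil
      exact hne (Walk.eq_of_length_eq_zero (p := pa)
        (by rw [← Walk.length_edges, hnil]; rfl))
    obtain ⟨e0, he0⟩ := List.exists_mem_of_ne_nil _ hennil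
    have hq0Q : q0 ∈ Q := mem_image.mpr
      ⟨e0, (hE e0).mpr (pa.edges_subset_edgeSet he0), hq0 e0 he0⟩
    refine mem_biUnion.mpr ⟨q0, hq0Q, ?_⟩
    rw [mem_filter]
    refine ⟨mem_univ _, hdiag, hnedge, reach_symm_all _ ?_⟩
    refine (pa.transfer (SimpleGraph.fromEdgeSet (↑(cls q0) : Set (Sym2 V))) ?_).reachable
    intro e he
    rw [edgeSet_fromEdgeSet]
    exact ⟨Finset.mem_coe.mpr (hedges e he),
      G.not_isDiag_of_mem_edgeSet (pa.edges_subset_edgeSet he)⟩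
  have h2 : NE.card ≤ ∑ q ∈ Q, ((cls q).card).choose 2 := by
    refine le_trans (card_le_card hcover) (le_trans card_biUnion_le ?_)
    refine Finset.sum_le_sum (fun q _ => ?_)
    exact nonedge_pairs_card_le G (cls q) (fun e he => (hE e).mp (mem_filter.mp he).1)
  have hQfib : ∑ q ∈ Q, (cls q).card = E.card := (card_eq_sum_card_image c E).symm
  have hclsne : ∀ q ∈ Q, (cls q).card ≠ 0 := by
    intro q hq
    obtain ⟨e, he, rfl⟩ := mem_image.mp hq
    exact card_ne_zero_of_mem (mem_filter.mpr ⟨he, rfl⟩)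
  have h3 : ∑ q ∈ Q, ((cls q).card).choose 2 ≤ ((E.card - Q.card) + 1).choose 2 := by
    have hsum := sum_choose_two_le Q (fun q => (cls q).card - 1)
    have heq : ∑ q ∈ Q, ((cls q).card).choose 2
        = ∑ q ∈ Q, (((cls q).card - 1) + 1).choose 2 := by
      refine sum_congr rfl (fun q hq => ?_)
      have := hclsne q hq
      congr 1
      omega
    have heq2 : ∑ q ∈ Q, ((cls q).card - 1) = E.card - Q.card := by
      have hx : ∑ q ∈ Q, (((cls q).card - 1) + 1) = ∑ q ∈ Q, (cls q).card := by
        refine sum_congr rfl (fun q hq => ?_)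
        have := hclsne q hq
        omega
      rw [Finset.sum_add_distrib, Finset.sum_const, smul_eq_mul, mul_one, hQfib] at hx
      omega
    rw [heq, ← heq2]
    exact hsum
  omega
end NonEdge

/-- For `2 ≤ t ≤ n - 1` and `k = C(n-t,2) + t(n-t)` one has `g(n,k) = k + t - 2`:
every connected graph on `n` vertices with at most `k + t - 2` edges has
`mc(G) ≤ k`, and some connected graph on `n` vertices with `k + t - 1` edges has
`mc(G) > k`. -/
theorem stmt_11 (n t k : ℕ) (ht : 2 ≤ t) (htn : t + 1 ≤ n)
    (hk : k = (n - t).choose 2 + t * (n - t)) :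
    (∀ G : SimpleGraph (Fin n), G.Connected →
      G.edgeSet.ncard ≤ k + t - 2 → mcNumber G ≤ k) ∧
    (∃ G : SimpleGraph (Fin n), G.Connected ∧
      G.edgeSet.ncard = k + t - 1 ∧ k < mcNumber G) := by
  classical
  have hmul : (n - t) * t = t * (n - t) := Nat.mul_comm _ _
  have hCn : n.choose 2 = k + t.choose 2 := by
    have h1 : n.choose 2 = ((n - t) + t).choose 2 := by
      congr 1
      omega
    rw [h1, choose_two_split]
    omega
  constructor
  · intro G hconn hm
    rw [mcNumber]
    refine csSup_le' ?_
    rintro N ⟨c, hc, hN⟩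
    set E : Finset (Sym2 (Fin n)) := (G.edgeSet.toFinite).toFinset with hEdef
    have hEmem : ∀ e, e ∈ E ↔ e ∈ G.edgeSet := fun e => (G.edgeSet.toFinite).mem_toFinset
    have h1 : G.edgeSet.ncard = E.card := by
      rw [hEdef, Set.ncard_eq_toFinset_card _ G.edgeSet.toFinite]
    have h2 : (c '' G.edgeSet).ncard = (E.image c).card := by
      rw [← Set.ncard_coe_finset, Finset.coe_image, hEdef, Set.Finite.coe_toFinset]
    rw [h1] at hm
    rw [h2] at hN
    by_contra hNk
    push_neg at hNk
    have hmc := mc_count G c hc E hEmem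
    rw [Fintype.card_fin] at hmc
    have hNm : (E.image c).card ≤ E.card := card_image_le
    obtain ⟨s, rfl⟩ : ∃ s, t = s + 2 := ⟨t - 2, by omega⟩
    have hts : (s + 2).choose 2 = s.choose 2 + 2*s + 1 := by
      have e1 : (s+2).choose 2 = (s+1).choose 2 + (s+1) := choose_two_succ (s+1)
      have e2 := choose_two_succ s
      omega
    have hb : k + 1 ≤ (E.image c).card := by omega
    have ha : E.card ≤ k + s := by omega
    have hw1 : E.card - (E.image c).card + 1 ≤ s := by omega
    have hmono : ((E.card - (E.image c).card) + 1).choose 2 ≤ s.choose 2 :=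
      Nat.choose_le_choose _ hw1
    have key : k + (s+2).choose 2 ≤ (k + (s+2) - 2) + s.choose 2 := by
      calc k + (s+2).choose 2 = n.choose 2 := hCn.symm
        _ ≤ E.card + ((E.card - (E.image c).card) + 1).choose 2 := hmc
        _ ≤ (k + (s+2) - 2) + s.choose 2 := Nat.add_le_add hm hmono
    omega
  · set Sf : Finset (Fin n) := univ.filter (fun u : Fin n => (u:ℕ) + 1 < t) with hSf
    set HS : SimpleGraph (Fin n) :=
      SimpleGraph.fromRel (fun u v => (u:ℕ) + 1 < t ∧ (v:ℕ) + 1 < t) with hHS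
    set G : SimpleGraph (Fin n) := ⊤ \ HS with hG
    have hGadj : ∀ u v : Fin n, G.Adj u v ↔ u ≠ v ∧ ¬((u:ℕ)+1 < t ∧ (v:ℕ)+1 < t) := by
      intro u v
      rw [hG, sdiff_adj, top_adj, hHS, fromRel_adj]
      constructor
      · rintro ⟨h1, h2⟩
        exact ⟨h1, fun hh => h2 ⟨h1, Or.inl hh⟩⟩
      · rintro ⟨h1, h2⟩
        refine ⟨h1, fun hh => h2 ?_⟩
        rcases hh.2 with hh2 | hh2
        · exact hh2
        · exact ⟨hh2.2, hh2.1⟩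
    set w : Fin n := ⟨t - 1, by omega⟩ with hw
    have hwadj : ∀ u : Fin n, (u:ℕ) + 1 < t → G.Adj u w := by
      intro u hu
      rw [hGadj]
      constructor
      · intro he
        have hval := congrArg Fin.val he
        have : (w : ℕ) = t - 1 := rfl
        omega
      · rintro ⟨-, hw2⟩
        have : t - 1 + 1 < t := hw2
        omega
    have hconn : G.Connected := by
      rw [connected_iff]
      refine ⟨fun u v => ?_, ⟨⟨0, by omega⟩⟩⟩
      by_cases huv : u = v
      · subst huv; exact Reachable.refl u
      by_cases hadj : G.Adj u v
      · exact hadj.reachable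
      have hsm : (u:ℕ)+1 < t ∧ (v:ℕ)+1 < t := by
        by_contra hcon
        exact hadj ((hGadj u v).mpr ⟨huv, fun hh => hcon hh⟩)
      exact ((hwadj u hsm.1).reachable).trans (((hwadj v hsm.2).reachable).symm)
    -- cardinality of the small side
    have hSt : Sf.card = t - 1 := by
      rw [← Finset.card_image_of_injective _ Fin.val_injective]
      have himg : Sf.image (fun u : Fin n => (u:ℕ)) = Finset.range (t-1) := by
        ext i
        simp only [hSf, Finset.mem_image, mem_filter, mem_univ, true_and, Finset.mem_range]
        constructor
        · rintro ⟨u, hu, rfl⟩; omega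
        · intro hi
          exact ⟨⟨i, by omega⟩, (by omega : i + 1 < t), rfl⟩
      rw [himg, Finset.card_range]
    -- edge count
    have hHSE : HS.edgeFinset = Sf.offDiag.image Sym2.mk.uncurry := by
      ext p
      refine Sym2.ind (f := fun q => q ∈ _ ↔ q ∈ _) (fun u v => ?_) p
      show s(u,v) ∈ HS.edgeFinset ↔ s(u,v) ∈ Sf.offDiag.image Sym2.mk.uncurry
      rw [mem_edgeFinset, mem_edgeSet, hHS, fromRel_adj]
      simp only [hSf, mem_image, mem_offDiag, mem_filter, mem_univ, true_and, Prod.exists,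
        Function.uncurry_apply_pair, Sym2.eq_iff]
      constructor
      · rintro ⟨hne, h | h⟩
        · exact ⟨u, v, ⟨h.1, h.2, hne⟩, Or.inl ⟨rfl, rfl⟩⟩
        · exact ⟨u, v, ⟨h.2, h.1, hne⟩, Or.inl ⟨rfl, rfl⟩⟩
      · rintro ⟨a, b, ⟨ha, hb, hab⟩, ⟨rfl, rfl⟩ | ⟨rfl, rfl⟩⟩
        · exact ⟨hab, Or.inl ⟨ha, hb⟩⟩
        · exact ⟨hab.symm, Or.inl ⟨hb, ha⟩⟩
    have hHScard : HS.edgeFinset.card = (t-1).choose 2 := by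
      rw [hHSE, Sym2.card_image_offDiag, hSt]
    have hsup : G ⊔ HS = ⊤ := by rw [hG]; exact sdiff_sup_cancel le_top
    have hEtop : (⊤ : SimpleGraph (Fin n)).edgeSet = G.edgeSet ∪ HS.edgeSet := by
      rw [← hsup, edgeSet_sup]
    have hdisjS : Disjoint G.edgeSet HS.edgeSet := by
      rw [Set.disjoint_left]
      intro e heG heH
      refine Sym2.ind (f := fun q => q ∈ G.edgeSet → q ∈ HS.edgeSet → False)
        (fun u v hG1 hH1 => ?_) e heG heH
      rw [mem_edgeSet] at hG1 hH1
      rw [hGadj] at hG1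
      rw [hHS, fromRel_adj] at hH1
      obtain ⟨-, h | h⟩ := hH1
      · exact hG1.2 h
      · exact hG1.2 ⟨h.2, h.1⟩
    have htopcard : (⊤ : SimpleGraph (Fin n)).edgeSet.ncard = n.choose 2 := by
      rw [← coe_edgeFinset, Set.ncard_coe_finset, card_edgeFinset_top_eq_card_choose_two,
        Fintype.card_fin]
    have hHScard' : HS.edgeSet.ncard = (t-1).choose 2 := by
      rw [← coe_edgeFinset, Set.ncard_coe_finset, hHScard]
    have hGcardS : G.edgeSet.ncard = G.edgeFinset.card := by
      rw [← coe_edgeFinset, Set.ncard_coe_finset]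
    have hunion : (G.edgeSet ∪ HS.edgeSet).ncard = G.edgeSet.ncard + HS.edgeSet.ncard :=
      Set.ncard_union_eq hdisjS G.edgeSet.toFinite HS.edgeSet.toFinite
    rw [hEtop, hunion] at htopcard
    have hct : t.choose 2 = (t-1).choose 2 + (t-1) := by
      have h0 := choose_two_succ (t-1)
      rw [show t - 1 + 1 = t by omega] at h0
      exact h0
    have hGm' : G.edgeSet.ncard = k + t - 1 := by omega
    have hGm : G.edgeFinset.card = k + t - 1 := by rw [← hGcardS]; exact hGm'
    -- the coloring
    set star : Finset (Sym2 (Fin n)) := Sf.image (fun x => s(w, x)) with hstar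
    set ι : Sym2 (Fin n) → ℕ := fun e => ((Fintype.equivFin (Sym2 (Fin n))) e : ℕ) with hι
    set c : Sym2 (Fin n) → ℕ := fun e => if e ∈ star then 0 else ι e + 1 with hcol
    have hmemstar : ∀ x : Fin n, (x:ℕ)+1 < t → s(w, x) ∈ star := by
      intro x hx
      rw [hstar]
      exact mem_image.mpr ⟨x, by rw [hSf]; exact mem_filter.mpr ⟨mem_univ _, hx⟩, rfl⟩
    have hstarE : star ⊆ G.edgeFinset := by
      intro e he
      rw [hstar, mem_image] at he
      obtain ⟨x, hx, rfl⟩ := he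
      rw [hSf, mem_filter] at hx
      exact mem_edgeFinset.mpr ((G.mem_edgeSet).mpr ((hwadj x hx.2).symm))
    have hstarcard : star.card = t - 1 := by
      rw [hstar, Finset.card_image_of_injOn, hSt]
      intro x hx y hy hxy
      exact Sym2.congr_right.mp hxy
    have hMC : IsMCColoring G c := by
      intro u v
      by_cases huv : u = v
      · subst huv
        exact ⟨Walk.nil, Walk.IsPath.nil, 0, by simp⟩
      by_cases hadj : G.Adj u v
      · refine ⟨Walk.cons hadj Walk.nil, ?_, c s(u,v), ?_⟩
        · simp [Walk.isPath_def, huv]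
        · intro e he
          simp only [Walk.edges_cons, Walk.edges_nil, List.mem_singleton] at he
          rw [he]
      · have hsm : (u:ℕ)+1 < t ∧ (v:ℕ)+1 < t := by
          by_contra hcon
          exact hadj ((hGadj u v).mpr ⟨huv, fun hh => hcon hh⟩)
        have h1 : G.Adj u w := hwadj u hsm.1
        have h2 : G.Adj w v := (hwadj v hsm.2).symm
        refine ⟨Walk.cons h1 (Walk.cons h2 Walk.nil), ?_, 0, ?_⟩
        · simp only [Walk.isPath_def, Walk.support_cons, Walk.support_nil]
          simp [h1.ne, h2.ne, huv]
        · intro e he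
          simp only [Walk.edges_cons, Walk.edges_nil, List.mem_cons,
            List.mem_singleton, List.not_mem_nil, or_false] at he
          rcases he with rfl | rfl
          · rw [hcol]
            have : s(u, w) = s(w, u) := Sym2.eq_swap
            rw [this]
            simp [hmemstar u hsm.1]
          · rw [hcol]
            simp [hmemstar v hsm.2]
    have hstarne : star.Nonempty := by
      refine ⟨s(w, ⟨0, by omega⟩), hmemstar _ ?_⟩
      have : ((⟨0, by omega⟩ : Fin n) : ℕ) = 0 := rfl
      omega
    have hinj : Function.Injective (fun e : Sym2 (Fin n) => ι e + 1) := by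
      intro a b hab
      simp only [hι] at hab
      have : (Fintype.equivFin (Sym2 (Fin n))) a = (Fintype.equivFin (Sym2 (Fin n))) b :=
        Fin.ext (by omega)
      exact (Fintype.equivFin (Sym2 (Fin n))).injective this
    have himgeq : G.edgeFinset.image c
        = insert 0 ((G.edgeFinset \ star).image (fun e => ι e + 1)) := by
      conv_lhs => rw [← union_sdiff_of_subset hstarE]
      rw [Finset.image_union]
      have hi1 : star.image c = {0} := by
        have : star.image c = star.image (fun _ => 0) :=
          Finset.image_congr (fun e he => by rw [hcol]; simp [Finset.mem_coe.mp he])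
        rw [this]
        exact Finset.image_const hstarne 0
      have hi2 : (G.edgeFinset \ star).image c
          = (G.edgeFinset \ star).image (fun e => ι e + 1) :=
        Finset.image_congr (fun e he => by rw [hcol]; simp [(mem_sdiff.mp (Finset.mem_coe.mp he)).2])
      rw [hi1, hi2]
      exact (Finset.insert_eq 0 _).symm
    have hccard : (G.edgeFinset.image c).card = k + 1 := by
      rw [himgeq, Finset.card_insert_of_notMem, Finset.card_image_of_injective _ hinj,
        card_sdiff_of_subset hstarE, hGm, hstarcard]
      · omega
      · intro h0
        rw [Finset.mem_image] at h0
        obtain ⟨e, -, he⟩ := h0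
        omega
    have hccard' : (c '' G.edgeSet).ncard = k + 1 := by
      rw [← coe_edgeFinset G, ← Finset.coe_image, Set.ncard_coe_finset]
      exact hccard
    refine ⟨G, hconn, hGm', ?_⟩
    have hmem : k + 1 ∈ {N | ∃ c' : Sym2 (Fin n) → ℕ,
        IsMCColoring G c' ∧ (c' '' G.edgeSet).ncard = N} := ⟨c, hMC, hccard'⟩
    have hbdd : BddAbove {N | ∃ c' : Sym2 (Fin n) → ℕ,
        IsMCColoring G c' ∧ (c' '' G.edgeSet).ncard = N} := by
      refine ⟨Fintype.card (Sym2 (Fin n)), ?_⟩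
      rintro N ⟨c', -, rfl⟩
      calc (c' '' G.edgeSet).ncard ≤ G.edgeSet.ncard := Set.ncard_image_le G.edgeSet.toFinite
        _ ≤ (Set.univ : Set (Sym2 (Fin n))).ncard :=
            Set.ncard_le_ncard (Set.subset_univ _) Set.finite_univ
        _ = Fintype.card (Sym2 (Fin n)) := by rw [Set.ncard_univ, Nat.card_eq_fintype_card]
    have hle : k + 1 ≤ mcNumber G := le_csSup hbdd hmem
    omega
end

section
/- Let G be a connected graph with n > 3 vertices and m edges. If G is triangle-free, then mc(G) = m - n + 2. -/
section helpers

open SimpleGraph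

variable {V : Type*}

lemma exists_pred (H : SimpleGraph V) {x0 x : V} (h : H.Reachable x0 x) (hne : x ≠ x0) :
    ∃ y, H.Adj y x ∧ H.Reachable x0 y ∧ H.dist x0 y < H.dist x0 x := by
  obtain ⟨p, hp⟩ := h.exists_walk_length_eq_dist
  obtain ⟨y, hadj, q, hq⟩ := SimpleGraph.Walk.exists_eq_cons_of_ne hne p.reverse
  refine ⟨y, hadj.symm, ⟨q.reverse⟩, ?_⟩
  have h1 : H.dist x0 y ≤ q.reverse.length := SimpleGraph.dist_le _
  have h2 : p.reverse.length = q.length + 1 := by rw [hq]; simp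
  have h3 : p.reverse.length = p.length := SimpleGraph.Walk.length_reverse _
  have h4 : q.reverse.length = q.length := SimpleGraph.Walk.length_reverse _
  omega

lemma card_le_of_reachable (H : SimpleGraph V) (x0 : V) (S : Finset V) (F : Finset (Sym2 V))
    (hF : ∀ e ∈ H.edgeSet, (∀ z ∈ e, H.Reachable x0 z) → e ∈ F)
    (hS : ∀ x ∈ S, x ≠ x0 ∧ H.Reachable x0 x) : S.card ≤ F.card := by
  classical
  set f : V → Sym2 V := fun x =>
    if h : x ≠ x0 ∧ H.Reachable x0 x then s((exists_pred H h.2 h.1).choose, x) else s(x, x)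
    with hf
  have hspec : ∀ x (h : x ≠ x0 ∧ H.Reachable x0 x),
      H.Adj (exists_pred H h.2 h.1).choose x ∧ H.Reachable x0 (exists_pred H h.2 h.1).choose ∧
        H.dist x0 (exists_pred H h.2 h.1).choose < H.dist x0 x :=
    fun x h => (exists_pred H h.2 h.1).choose_spec
  apply Finset.card_le_card_of_injOn f
  · intro x hx
    have h := hS x hx
    obtain ⟨hadj, hry, hd⟩ := hspec x h
    have hfx : f x = s((exists_pred H h.2 h.1).choose, x) := by rw [hf]; simp [h]
    rw [hfx]
    refine hF _ (H.mem_edgeSet.mpr hadj) ?_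
    intro z hz
    rcases Sym2.mem_iff.mp hz with rfl | rfl
    · exact hry
    · exact h.2
  · intro x1 hx1 x2 hx2 heq
    have h1 := hS x1 hx1
    have h2 := hS x2 hx2
    obtain ⟨_, _, hd1⟩ := hspec x1 h1
    obtain ⟨_, _, hd2⟩ := hspec x2 h2
    have e1 : f x1 = s((exists_pred H h1.2 h1.1).choose, x1) := by rw [hf]; simp [h1]
    have e2 : f x2 = s((exists_pred H h2.2 h2.1).choose, x2) := by rw [hf]; simp [h2]
    rw [e1, e2] at heq
    rcases Sym2.eq_iff.mp heq with ⟨-, h⟩ | ⟨ha, hb⟩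
    · exact h
    · exfalso
      have k1 : H.dist x0 x2 < H.dist x0 x1 := by rw [← ha]; exact hd1
      have k2 : H.dist x0 x1 < H.dist x0 x2 := by rw [hb]; exact hd2
      omega

lemma exists_tree_coloring [Fintype V] (G : SimpleGraph V) (hG : G.Connected)
    (hn : 2 ≤ Fintype.card V) :
    ∃ c : Sym2 V → ℕ, IsMCColoring G c ∧
      (c '' G.edgeSet).ncard + Fintype.card V = G.edgeSet.ncard + 2 := by
  classical
  have hne : Nonempty V := hG.nonempty
  obtain ⟨r⟩ := hne
  -- predecessor function
  set pred : V → V := fun x =>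
    if h : x ≠ r then (exists_pred G (hG.preconnected r x) h).choose else x with hpreddef
  have hpred : ∀ x (h : x ≠ r), G.Adj (pred x) x ∧ G.dist r (pred x) < G.dist r x := by
    intro x h
    have : pred x = (exists_pred G (hG.preconnected r x) h).choose := by
      rw [hpreddef]; simp [h]
    rw [this]
    obtain ⟨h1, _, h3⟩ := (exists_pred G (hG.preconnected r x) h).choose_spec
    exact ⟨h1, h3⟩
  set ET : Set (Sym2 V) := (fun x => s(pred x, x)) '' {x : V | x ≠ r} with hETdef
  have hET_sub : ET ⊆ G.edgeSet := by
    rintro _ ⟨x, hx, rfl⟩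
    exact G.mem_edgeSet.mpr (hpred x hx).1
  have hinj : Set.InjOn (fun x => s(pred x, x)) {x : V | x ≠ r} := by
    intro x1 hx1 x2 hx2 heq
    rcases Sym2.eq_iff.mp heq with ⟨-, h⟩ | ⟨ha, hb⟩
    · exact h
    · exfalso
      have hd1 := (hpred x1 hx1).2
      have hd2 := (hpred x2 hx2).2
      have k1 : G.dist r x2 < G.dist r x1 := by rw [← ha]; exact hd1
      have k2 : G.dist r x1 < G.dist r x2 := by rw [hb]; exact hd2
      omega
  have hdomcard : ({x : V | x ≠ r}).ncard = Fintype.card V - 1 := by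
    have : {x : V | x ≠ r} = (↑((Finset.univ : Finset V).erase r) : Set V) := by
      ext x; simp
    rw [this, Set.ncard_coe_finset, Finset.card_erase_of_mem (Finset.mem_univ r),
      Finset.card_univ]
  have hET_card : ET.ncard = Fintype.card V - 1 := by
    rw [hETdef, Set.ncard_image_of_injOn hinj, hdomcard]
  set T : SimpleGraph V := SimpleGraph.fromEdgeSet ET with hTdef
  have hTadj : ∀ x (h : x ≠ r), T.Adj (pred x) x := by
    intro x h
    rw [hTdef, SimpleGraph.fromEdgeSet_adj]
    exact ⟨⟨x, h, rfl⟩, (hpred x h).1.ne⟩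
  have reachT : ∀ x, T.Reachable r x := by
    have key : ∀ n x, G.dist r x ≤ n → T.Reachable r x := by
      intro n
      induction n with
      | zero =>
        intro x hx
        by_cases h : x = r
        · subst h; exact Reachable.refl x
        · exact absurd (hpred x h).2 (by omega)
      | succ n ih =>
        intro x hx
        by_cases h : x = r
        · subst h; exact Reachable.refl x
        · obtain ⟨hadj, hdlt⟩ := hpred x h
          exact (ih (pred x) (by omega)).trans (hTadj x h).reachable
    exact fun x => key (G.dist r x) x le_rfl
  have hTedge : T.edgeSet ⊆ ET := by
    rw [hTdef, SimpleGraph.edgeSet_fromEdgeSet]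
    exact Set.diff_subset
  -- injective ℕ-labelling of edges
  have : Finite (Sym2 V) := by infer_instance
  obtain ⟨ι, hι⟩ := Countable.exists_injective_nat (Sym2 V)
  refine ⟨fun e => if e ∈ ET then 0 else ι e + 1, ?_, ?_⟩
  · -- MC coloring
    intro u w
    have hr : T.Reachable u w := (reachT u).symm.trans (reachT w)
    obtain ⟨p0⟩ := hr
    have hedges : ∀ e ∈ (p0.toPath : T.Walk u w).edges, e ∈ G.edgeSet := by
      intro e he
      exact hET_sub (hTedge ((p0.toPath : T.Walk u w).edges_subset_edgeSet he))
    refine ⟨(p0.toPath : T.Walk u w).transfer G hedges,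
      SimpleGraph.Walk.IsPath.transfer _ p0.toPath.2, 0, ?_⟩
    intro e he
    rw [SimpleGraph.Walk.edges_transfer] at he
    have : e ∈ ET := hTedge ((p0.toPath : T.Walk u w).edges_subset_edgeSet he)
    simp [this]
  · -- number of colors
    have himg : (fun e => if e ∈ ET then 0 else ι e + 1) '' G.edgeSet =
        insert 0 ((fun e => ι e + 1) '' (G.edgeSet \ ET)) := by
      ext y
      constructor
      · rintro ⟨e, he, rfl⟩
        by_cases h : e ∈ ET
        · simp [h]
        · exact Set.mem_insert_iff.mpr (Or.inr ⟨e, ⟨he, h⟩, by simp [h]⟩)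
      · intro hy
        rcases Set.mem_insert_iff.mp hy with rfl | ⟨e, ⟨he, henot⟩, rfl⟩
        · obtain ⟨x, hx⟩ := Fintype.exists_ne_of_one_lt_card (by omega) r
          have hmem : s(pred x, x) ∈ ET := ⟨x, hx, rfl⟩
          exact ⟨s(pred x, x), hET_sub hmem, by simp [hmem]⟩
        · exact ⟨e, he, by simp [henot]⟩
    rw [himg]
    have hfin : (G.edgeSet \ ET).Finite := Set.toFinite _
    have h0 : (0 : ℕ) ∉ (fun e => ι e + 1) '' (G.edgeSet \ ET) := by
      rintro ⟨e, -, h⟩; simp at h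
    rw [Set.ncard_insert_of_notMem h0 (hfin.image _)]
    have hinj2 : Set.InjOn (fun e => ι e + 1) (G.edgeSet \ ET) := by
      intro a _ b _ h
      simp only at h
      exact hι (by omega)
    rw [Set.ncard_image_of_injOn hinj2, Set.ncard_diff hET_sub (Set.toFinite _), hET_card]
    have hle : ET.ncard ≤ G.edgeSet.ncard := Set.ncard_le_ncard hET_sub (Set.toFinite _)
    rw [hET_card] at hle
    omega

lemma mc_upper [Fintype V] (G : SimpleGraph V) (hG : G.Connected)
    (hn : 2 ≤ Fintype.card V) (htf : G.CliqueFree 3) (c : Sym2 V → ℕ)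
    (hc : IsMCColoring G c) :
    (c '' G.edgeSet).ncard + Fintype.card V ≤ G.edgeSet.ncard + 2 := by
  classical
  have hVne : Nonempty V := hG.nonempty
  obtain ⟨v⟩ := hVne
  obtain ⟨w, hw⟩ := Fintype.exists_ne_of_one_lt_card (by omega) v
  obtain ⟨u0, hu0v, -, -⟩ := exists_pred G (hG.preconnected w v) hw.symm
  have hvu0 : G.Adj v u0 := hu0v.symm
  set N : Finset V := G.neighborFinset v with hNdef
  have hu0N : u0 ∈ N := by rw [hNdef, mem_neighborFinset]; exact hvu0
  set M : Finset V := Finset.univ.filter (fun m => m ≠ v ∧ ¬ G.Adj v m) with hMdef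
  set NB : Finset V := N.erase u0 with hNBdef
  have hMN : ∀ x, x ∈ M → x ∈ N → False := by
    intro x hxM hxN
    rw [hMdef, Finset.mem_filter] at hxM
    rw [hNdef, mem_neighborFinset] at hxN
    exact hxM.2.2 hxN
  have hvM : v ∉ M := by rw [hMdef, Finset.mem_filter]; simp
  have hvN : v ∉ N := by rw [hNdef, mem_neighborFinset]; exact fun h => G.irrefl h
  have hMnev : ∀ m ∈ M, m ≠ v := by
    intro m hm; rw [hMdef, Finset.mem_filter] at hm; exact hm.2.1
  have hNnev : ∀ x ∈ N, x ≠ v := by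
    intro x hx; rw [hNdef, mem_neighborFinset] at hx; exact hx.ne'
  have hpart : Fintype.card V = M.card + N.card + 1 := by
    have huniv : (insert v (M ∪ N)) = Finset.univ := by
      ext x
      simp only [Finset.mem_insert, Finset.mem_union, Finset.mem_univ, iff_true]
      by_cases hxv : x = v
      · exact Or.inl hxv
      · by_cases hadj : G.Adj v x
        · exact Or.inr (Or.inr (by rw [hNdef, mem_neighborFinset]; exact hadj))
        · exact Or.inr (Or.inl (by
            rw [hMdef, Finset.mem_filter]; exact ⟨Finset.mem_univ x, hxv, hadj⟩))
    have hdisjMN : Disjoint M N := Finset.disjoint_left.mpr (fun {x} hx hx' => hMN x hx hx')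
    have hvMN : v ∉ M ∪ N := by
      rw [Finset.mem_union]; rintro (h | h); exacts [hvM h, hvN h]
    rw [← Finset.card_univ, ← huniv, Finset.card_insert_of_notMem hvMN,
      Finset.card_union_of_disjoint hdisjMN]
  have hNBcard : NB.card + 1 = N.card := Finset.card_erase_add_one hu0N
  -- choose monochromatic walks from v and from u0
  have hex1 : ∀ m : V, ∃ (kk : ℕ) (p : G.Walk v m), ∀ e ∈ p.edges, c e = kk := by
    intro m; obtain ⟨p, -, kk, hkk⟩ := hc v m; exact ⟨kk, p, hkk⟩
  choose κ pm hκ using hex1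
  have hex2 : ∀ x : V, ∃ (kk : ℕ) (p : G.Walk u0 x), ∀ e ∈ p.edges, c e = kk := by
    intro x; obtain ⟨p, -, kk, hkk⟩ := hc u0 x; exact ⟨kk, p, hkk⟩
  choose μ qw hμ using hex2
  set I : Finset ℕ := G.edgeFinset.image c with hIdef
  have hκI : ∀ m ∈ M, κ m ∈ I := by
    intro m hm
    have hmv : v ≠ m := fun h => hvM (h ▸ hm)
    obtain ⟨x, hx, p', hp'⟩ := SimpleGraph.Walk.exists_eq_cons_of_ne hmv (pm m)
    have he : s(v, x) ∈ (pm m).edges := by rw [hp']; simp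
    exact Finset.mem_image.mpr ⟨s(v, x), mem_edgeFinset.mpr (G.mem_edgeSet.mpr hx), hκ m _ he⟩
  have hμI : ∀ x ∈ NB, μ x ∈ I := by
    intro x hx'
    have hxu : u0 ≠ x := fun h => Finset.ne_of_mem_erase (hNBdef ▸ hx') h.symm
    obtain ⟨y, hy, p', hp'⟩ := SimpleGraph.Walk.exists_eq_cons_of_ne hxu (qw x)
    have he : s(u0, y) ∈ (qw x).edges := by rw [hp']; simp
    exact Finset.mem_image.mpr ⟨s(u0, y), mem_edgeFinset.mpr (G.mem_edgeSet.mpr hy), hμ x _ he⟩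
  have hsum1 : G.edgeFinset.card = ∑ k ∈ I, (G.edgeFinset.filter (fun e => c e = k)).card :=
    Finset.card_eq_sum_card_fiberwise (fun e he => Finset.mem_image_of_mem c he)
  have hsum2 : M.card = ∑ k ∈ I, (M.filter (fun m => κ m = k)).card :=
    Finset.card_eq_sum_card_fiberwise hκI
  have hsum3 : NB.card = ∑ k ∈ I, (NB.filter (fun x => μ x = k)).card :=
    Finset.card_eq_sum_card_fiberwise hμI
  have key : ∀ k ∈ I,
      (M.filter (fun m => κ m = k)).card + (NB.filter (fun x => μ x = k)).card + 1
      ≤ (G.edgeFinset.filter (fun e => c e = k)).card := by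
    intro k hk
    set A : Finset V := M.filter (fun m => κ m = k) with hAdef
    set B : Finset V := NB.filter (fun x => μ x = k) with hBdef
    set Ek : Finset (Sym2 V) := G.edgeFinset.filter (fun e => c e = k) with hEkdef
    set H : SimpleGraph V := SimpleGraph.fromEdgeSet (↑Ek) with hHdef
    have hHsub : ∀ e ∈ H.edgeSet, e ∈ Ek := by
      intro e he
      rw [hHdef, SimpleGraph.edgeSet_fromEdgeSet] at he
      exact Finset.mem_coe.mp he.1
    have hHsup : ∀ e ∈ Ek, e ∈ H.edgeSet := by
      intro e he
      have heG : e ∈ G.edgeSet := mem_edgeFinset.mp (Finset.mem_filter.mp he).1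
      rw [hHdef, SimpleGraph.edgeSet_fromEdgeSet]
      exact ⟨Finset.mem_coe.mpr he, G.not_isDiag_of_mem_edgeSet heG⟩
    have hHG : ∀ a b, H.Adj a b → G.Adj a b := by
      intro a b hab
      have : s(a, b) ∈ Ek := hHsub _ (H.mem_edgeSet.mpr hab)
      exact G.mem_edgeSet.mp (mem_edgeFinset.mp (Finset.mem_filter.mp this).1)
    have hwalkH : ∀ (a b : V) (p : G.Walk a b), (∀ e ∈ p.edges, c e = k) → H.Reachable a b :=
      fun a b p hp => ⟨p.transfer H (fun e he => hHsup e (Finset.mem_filter.mpr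
        ⟨mem_edgeFinset.mpr (p.edges_subset_edgeSet he), hp e he⟩))⟩
    have hAM : ∀ m ∈ A, m ∈ M := fun m hm => (Finset.mem_filter.mp hm).1
    have hBNB : ∀ x ∈ B, x ∈ NB := fun x hx => (Finset.mem_filter.mp hx).1
    have hBN : ∀ x ∈ B, x ∈ N := fun x hx => Finset.mem_of_mem_erase (hNBdef ▸ hBNB x hx)
    have hBu0 : ∀ x ∈ B, x ≠ u0 := fun x hx => Finset.ne_of_mem_erase (hNBdef ▸ hBNB x hx)
    have hreachA : ∀ m ∈ A, H.Reachable v m := by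
      intro m hm
      exact hwalkH v m (pm m) (fun e he => (hκ m e he).trans (Finset.mem_filter.mp hm).2)
    have hreachB : ∀ x ∈ B, H.Reachable u0 x := by
      intro x hx
      exact hwalkH u0 x (qw x) (fun e he => (hμ x e he).trans (Finset.mem_filter.mp hx).2)
    have hdisjAB : Disjoint A B :=
      Finset.disjoint_left.mpr (fun {x} hx hx' => hMN x (hAM x hx) (hBN x hx'))
    by_cases hvu : H.Reachable v u0
    · have hu0AB : u0 ∉ A ∪ B := by
        rw [Finset.mem_union]
        rintro (h | h)
        · exact hMN u0 (hAM u0 h) hu0N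
        · exact hBu0 u0 h rfl
      have hScard : (insert u0 (A ∪ B)).card = A.card + B.card + 1 := by
        rw [Finset.card_insert_of_notMem hu0AB, Finset.card_union_of_disjoint hdisjAB]
      have hle := card_le_of_reachable H v (insert u0 (A ∪ B)) Ek
        (fun e he _ => hHsub e he) ?_
      · omega
      · intro x hx
        rcases Finset.mem_insert.mp hx with rfl | hx'
        · exact ⟨hvu0.ne', hvu⟩
        · rcases Finset.mem_union.mp hx' with h | h
          · exact ⟨hMnev x (hAM x h), hreachA x h⟩
          · exact ⟨hNnev x (hBN x h), hvu.trans (hreachB x h)⟩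
    · set Fv : Finset (Sym2 V) := Ek.filter (fun e => ∀ z ∈ e, H.Reachable v z) with hFvdef
      set Fu : Finset (Sym2 V) := Ek.filter (fun e => ∀ z ∈ e, H.Reachable u0 z) with hFudef
      have hdisjF : Disjoint Fv Fu := by
        rw [Finset.disjoint_left]
        intro e h1 h2
        have p1 := (Finset.mem_filter.mp h1).2
        have p2 := (Finset.mem_filter.mp h2).2
        have hex : ∃ a, a ∈ e := by
          induction e using Sym2.ind with
          | _ a b => exact ⟨a, Sym2.mem_mk_left a b⟩
        obtain ⟨a, ha⟩ := hex
        exact hvu ((p1 a ha).trans (p2 a ha).symm)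
      have hFE : Fv.card + Fu.card ≤ Ek.card := by
        rw [← Finset.card_union_of_disjoint hdisjF]
        exact Finset.card_le_card
          (Finset.union_subset (Finset.filter_subset _ _) (Finset.filter_subset _ _))
      have hFvA : A.Nonempty → A.card + 1 ≤ Fv.card := by
        rintro ⟨m0, hm0⟩
        obtain ⟨W⟩ := hreachA m0 hm0
        have hvm0 : v ≠ m0 := (hMnev m0 (hAM m0 hm0)).symm
        obtain ⟨x, hx, -, -⟩ := SimpleGraph.Walk.exists_eq_cons_of_ne hvm0 W
        have hxN : x ∈ N := by rw [hNdef, mem_neighborFinset]; exact hHG _ _ hx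
        have hxA : x ∉ A := fun h => hMN x (hAM x h) hxN
        have hcard : (insert x A).card = A.card + 1 := Finset.card_insert_of_notMem hxA
        have hle := card_le_of_reachable H v (insert x A) Fv
          (fun e he hr => Finset.mem_filter.mpr ⟨hHsub e he, hr⟩) ?_
        · omega
        · intro y hy
          rcases Finset.mem_insert.mp hy with rfl | hy'
          · exact ⟨hx.ne', hx.reachable⟩
          · exact ⟨hMnev y (hAM y hy'), hreachA y hy'⟩
      have hFuB : B.Nonempty → B.card + 1 ≤ Fu.card := by
        rintro ⟨w0, hw0⟩
        obtain ⟨W⟩ := hreachB w0 hw0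
        have huw0 : u0 ≠ w0 := (hBu0 w0 hw0).symm
        obtain ⟨z, hz, -, -⟩ := SimpleGraph.Walk.exists_eq_cons_of_ne huw0 W
        have hzG : G.Adj u0 z := hHG _ _ hz
        have hzN : z ∉ N := by
          intro hzN
          have hvz : G.Adj v z := by rw [hNdef, mem_neighborFinset] at hzN; exact hzN
          exact htf {v, u0, z} (is3Clique_triple_iff.mpr ⟨hvu0, hvz, hzG⟩)
        have hzB : z ∉ B := fun h => hzN (hBN z h)
        have hcard : (insert z B).card = B.card + 1 := Finset.card_insert_of_notMem hzB
        have hle := card_le_of_reachable H u0 (insert z B) Fu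
          (fun e he hr => Finset.mem_filter.mpr ⟨hHsub e he, hr⟩) ?_
        · omega
        · intro y hy
          rcases Finset.mem_insert.mp hy with rfl | hy'
          · exact ⟨hz.ne', hz.reachable⟩
          · exact ⟨hBu0 y hy', hreachB y hy'⟩
      have hEk1 : 1 ≤ Ek.card := by
        obtain ⟨e, heF, hek⟩ := Finset.mem_image.mp (hIdef ▸ hk)
        exact Finset.card_pos.mpr ⟨e, Finset.mem_filter.mpr ⟨heF, hek⟩⟩
      have hFvEk : Fv.card ≤ Ek.card := Finset.card_le_card (Finset.filter_subset _ _)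
      have hFuEk : Fu.card ≤ Ek.card := Finset.card_le_card (Finset.filter_subset _ _)
      rcases A.eq_empty_or_nonempty with hA | hA <;>
        rcases B.eq_empty_or_nonempty with hB | hB
      · have : A.card = 0 := by rw [hA]; rfl
        have hB0 : B.card = 0 := by rw [hB]; rfl
        omega
      · have hA0 : A.card = 0 := by rw [hA]; rfl
        have := hFuB hB
        omega
      · have hB0 : B.card = 0 := by rw [hB]; rfl
        have := hFvA hA
        omega
      · have h1 := hFvA hA
        have h2 := hFuB hB
        omega
  have hsumle := Finset.sum_le_sum key
  have hsum4 : ∑ k ∈ I,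
      ((M.filter (fun m => κ m = k)).card + (NB.filter (fun x => μ x = k)).card + 1)
      = M.card + NB.card + I.card := by
    rw [Finset.sum_add_distrib, Finset.sum_add_distrib, Finset.sum_const, smul_eq_mul,
      mul_one, ← hsum2, ← hsum3]
  have hItot : M.card + NB.card + I.card ≤ G.edgeFinset.card := by
    rw [hsum1, ← hsum4]; exact hsumle
  have h1 : (c '' G.edgeSet).ncard = I.card := by
    rw [hIdef, ← SimpleGraph.coe_edgeFinset, ← Finset.coe_image, Set.ncard_coe_finset]
  have h2 : G.edgeSet.ncard = G.edgeFinset.card := by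
    rw [← SimpleGraph.coe_edgeFinset, Set.ncard_coe_finset]
  omega

end helpers

/-- A triangle-free connected graph with `n > 3` vertices and `m` edges satisfies
`mc(G) = m - n + 2`. -/
theorem stmt_15 {V : Type*} [Fintype V] (G : SimpleGraph V) (hG : G.Connected)
    (hn : 3 < Fintype.card V) (htf : G.CliqueFree 3) :
    (mcNumber G : ℤ) = (G.edgeSet.ncard : ℤ) - Fintype.card V + 2 := by
  have hn2 : 2 ≤ Fintype.card V := by omega
  obtain ⟨c0, hc0, hX⟩ := exists_tree_coloring G hG hn2
  set X : ℕ := (c0 '' G.edgeSet).ncard with hXdef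
  set S : Set ℕ := {k | ∃ c : Sym2 V → ℕ, IsMCColoring G c ∧ (c '' G.edgeSet).ncard = k}
    with hSdef
  have hXS : X ∈ S := ⟨c0, hc0, rfl⟩
  have hub : ∀ k ∈ S, k ≤ X := by
    rintro k ⟨c, hc, rfl⟩
    have := mc_upper G hG hn2 htf c hc
    omega
  have hmc : mcNumber G = X := by
    rw [mcNumber, ← hSdef]
    exact le_antisymm (csSup_le ⟨X, hXS⟩ hub) (le_csSup ⟨X, hub⟩ hXS)
  rw [hmc]
  omega
end
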